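/- Synchronous incremental voting on K_n, elimination of an extreme opinion: let s = min_v X_v(0) and ℓ = max_v X_v(0) and suppose ℓ ≥ s+3. Then for every t ≥ 0, E[N_s(t+1)·N_ℓ(t+1) | X(t)] ≤ (1/4)·N_s(t)·N_ℓ(t), and consequently, for T = ⌈3 log n⌉, P[N_s(T)·N_ℓ(T) > 0] ≤ 1/n; that is, with probability at least 1 − 1/n one of the two extreme opinions has disappeared within ⌈3 log n⌉ steps. -/

import Mathlib

/-!
STATEMENT 8: Synchronous incremental voting on `K_n`, elimination of an extreme
opinion.  Let `s = min_v X_v(0)` and `ℓ = max_v X_v(0)` with `ℓ ≥ s+3`.  Then for every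
`t ≥ 0`, `E[N_s(t+1)·N_ℓ(t+1) | X(t)] ≤ (1/4)·N_s(t)·N_ℓ(t)` and, for
`T = ⌈3 log n⌉`, `P[N_s(T)·N_ℓ(T) > 0] ≤ 1/n`; that is, with probability at least
`1 − 1/n` one of the two extreme opinions has disappeared within `⌈3 log n⌉` steps.

On `K_n` the synchronous process is: every vertex independently chooses a uniformly
random vertex `w` (among all `n`) and updates towards its opinion.  The one-step
conditional expectation bound is stated for every configuration `x` whose opinions lie
in `[s, ℓ]` (which holds for every state `X(t)` of the process, since the minimum
present opinion can only increase and the maximum only decrease).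
-/

namespace KnSync8

/-- The incremental voting update rule. -/
def updateRule (a b : ℤ) : ℤ := if a < b then a + 1 else if b < a then a - 1 else a

/-- Expected value of a real-valued function under a probability mass function. -/
noncomputable def expVal {α : Type*} (p : PMF α) (f : α → ℝ) : ℝ :=
  ∑' a, (p a).toReal * f a

/-- The probability of an event under a probability mass function, as a real number. -/
noncomputable def prob {α : Type*} (p : PMF α) (A : Set α) : ℝ :=
  (∑' a, A.indicator p a).toReal

/-- One step of synchronous incremental voting on `K_n`: every vertex `v` independently
chooses a uniformly random vertex `c v` and updates using its (old) opinion. -/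
noncomputable def step (n : ℕ) [NeZero n] (x : Fin n → ℤ) : PMF (Fin n → ℤ) :=
  (PMF.uniformOfFintype (Fin n → Fin n)).map fun c => fun v => updateRule (x v) (x (c v))

/-- The distribution of the configuration after `t` steps, started from `x0`. -/
noncomputable def dist (n : ℕ) [NeZero n] (x0 : Fin n → ℤ) : ℕ → PMF (Fin n → ℤ)
  | 0 => PMF.pure x0
  | t + 1 => (dist n x0 t).bind (step n)

/-- `count n i x` is `N_i`: the number of vertices holding opinion `i`. -/
def count (n : ℕ) (i : ℤ) (x : Fin n → ℤ) : ℕ :=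
  (Finset.univ.filter fun v => x v = i).card

/-!
Only a vertex at `s` or `s + 1` can hold `s` after a step, and it does so exactly when the vertex
it samples is at `s`; symmetrically for `ℓ - 1`, `ℓ`. As `ℓ ≥ s + 3` these two groups `A`, `B` are
disjoint, so `N_s(t+1)` and `N_ℓ(t+1)` are driven by the samples of distinct vertices, which are
independent: `E[N_s(t+1) N_ℓ(t+1) | X(t)] = |A| |B| N_s N_ℓ / n² ≤ N_s N_ℓ / 4`, using
`|A| + |B| ≤ n`. Iterating gives `E[N_s(T) N_ℓ(T)] ≤ n² / 4^T ≤ 1 / n` for `T = ⌈3 log n⌉`, and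
Markov's inequality concludes.
-/

open scoped ENNReal
open Finset

/-- Expectation with values in `ℝ≥0∞`, where `tsum` needs no summability side conditions. -/
noncomputable def lexpVal {α : Type*} (p : PMF α) (f : α → ℝ≥0∞) : ℝ≥0∞ :=
  ∑' a, p a * f a

section lexpVal

variable {α β : Type*}

lemma lexpVal_pure (a : α) (f : α → ℝ≥0∞) : lexpVal (PMF.pure a) f = f a := by
  rw [lexpVal, tsum_eq_single a (fun b hb => by simp [hb])]
  simp

lemma lexpVal_map (p : PMF α) (g : α → β) (f : β → ℝ≥0∞) :
    lexpVal (p.map g) f = lexpVal p (f ∘ g) := by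
  simp only [lexpVal, PMF.map_apply, ← ENNReal.tsum_mul_right]
  rw [ENNReal.tsum_comm]
  refine tsum_congr fun a => ?_
  rw [tsum_eq_single (g a) (fun b hb => by simp [hb])]
  simp

lemma lexpVal_bind (p : PMF α) (q : α → PMF β) (f : β → ℝ≥0∞) :
    lexpVal (p.bind q) f = lexpVal p fun a => lexpVal (q a) f := by
  simp only [lexpVal, PMF.bind_apply, ← ENNReal.tsum_mul_right, ← ENNReal.tsum_mul_left]
  rw [ENNReal.tsum_comm]
  simp only [mul_assoc]

lemma lexpVal_uniformOfFintype [Fintype α] [Nonempty α] (f : α → ℝ≥0∞) :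
    lexpVal (PMF.uniformOfFintype α) f = (Fintype.card α : ℝ≥0∞)⁻¹ * ∑ a, f a := by
  simp [lexpVal, tsum_fintype, Finset.mul_sum]

lemma lexpVal_bind_le {p : PMF α} {q : α → PMF β} {f : α → ℝ≥0∞} {g : β → ℝ≥0∞} {c : ℝ≥0∞}
    (h : ∀ a ∈ p.support, lexpVal (q a) g ≤ c * f a) :
    lexpVal (p.bind q) g ≤ c * lexpVal p f := by
  rw [lexpVal_bind, lexpVal, lexpVal, ← ENNReal.tsum_mul_left]
  refine ENNReal.tsum_le_tsum fun a => ?_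
  by_cases ha : a ∈ p.support
  · calc p a * lexpVal (q a) g ≤ p a * (c * f a) := by gcongr; exact h a ha
      _ = c * (p a * f a) := by ring
  · simp [(PMF.mem_support_iff p a).not_left.mp ha]

lemma expVal_toReal (p : PMF α) {f : α → ℝ≥0∞} (hf : ∀ a, f a ≠ ∞) :
    expVal p (fun a => (f a).toReal) = (lexpVal p f).toReal := by
  rw [expVal, lexpVal,
    ENNReal.tsum_toReal_eq fun a => ENNReal.mul_ne_top (p.apply_ne_top a) (hf a)]
  simp only [ENNReal.toReal_mul]

lemma prob_le_lexpVal (p : PMF α) {A : Set α} {f : α → ℝ≥0∞} (hA : ∀ a ∈ A, 1 ≤ f a)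
    (hf : lexpVal p f ≠ ∞) : prob p A ≤ (lexpVal p f).toReal := by
  refine ENNReal.toReal_mono hf (ENNReal.tsum_le_tsum fun a => ?_)
  by_cases ha : a ∈ A
  · simpa [Set.indicator_of_mem ha] using mul_le_mul_right (hA a ha) (p a)
  · simp [Set.indicator_of_notMem ha]

end lexpVal

theorem sum_apply_mul_apply {ι κ R : Type*} [Fintype ι] [DecidableEq ι] [Fintype κ]
    [CommSemiring R] {v w : ι} (hvw : v ≠ w) (σ τ : κ → R) :
    ∑ c : ι → κ, σ (c v) * τ (c w) =
      (∑ u, σ u) * (∑ u, τ u) * (Fintype.card κ : R) ^ (Fintype.card ι - 2) := by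
  -- Written as a product over all coordinates, the sum over `c` factorises coordinatewise.
  have hprod (c : ι → κ) : σ (c v) * τ (c w) =
      ∏ i, (if i = v then σ (c i) else 1) * (if i = w then τ (c i) else 1) := by
    rw [Finset.prod_mul_distrib, Fintype.prod_ite_eq', Fintype.prod_ite_eq']
  have hw : w ∈ univ.erase v := mem_erase.mpr ⟨hvw.symm, mem_univ w⟩
  have hrest : ∀ i ∈ (univ.erase v).erase w,
      ∑ u, (if i = v then σ u else 1) * (if i = w then τ u else 1) = (Fintype.card κ : R) := by
    intro i hi
    obtain ⟨hiw, hiv⟩ : i ≠ w ∧ i ≠ v := by simpa using hi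
    simp [hiw, hiv]
  simp_rw [hprod]
  rw [← Fintype.prod_sum fun i u => (if i = v then σ u else 1) * (if i = w then τ u else 1),
    ← mul_prod_erase univ _ (mem_univ v), ← mul_prod_erase _ _ hw, prod_congr rfl hrest,
    prod_const, card_erase_of_mem hw, card_erase_of_mem (mem_univ v), card_univ, Nat.sub_sub]
  simp [hvw, hvw.symm, mul_assoc]

theorem sum_sum_apply_mul_sum_apply {ι κ R : Type*} [Fintype ι] [DecidableEq ι]
    [Fintype κ] [CommSemiring R] {A B : Finset ι} (hAB : Disjoint A B) (σ τ : κ → R) :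
    ∑ c : ι → κ, (∑ v ∈ A, σ (c v)) * (∑ w ∈ B, τ (c w)) =
      #A * #B * ((∑ u, σ u) * (∑ u, τ u) * (Fintype.card κ : R) ^ (Fintype.card ι - 2)) := by
  simp only [sum_mul_sum (s := A)]
  rw [sum_comm, sum_congr rfl fun v _ => sum_comm, sum_congr rfl fun v hv => sum_congr rfl
    fun w hw => sum_apply_mul_apply (by rintro rfl; exact disjoint_left.mp hAB hv hw) σ τ]
  simp only [sum_const, nsmul_eq_mul, mul_assoc]

theorem four_mul_card_mul_card_le_sq {ι : Type*} [Fintype ι] {A B : Finset ι}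
    (hAB : Disjoint A B) : 4 * (#A * #B) ≤ Fintype.card ι ^ 2 := by
  classical
  have hsum : #A + #B ≤ Fintype.card ι := by
    rw [← card_union_of_disjoint hAB]; exact card_le_univ _
  nlinarith [sq_nonneg ((#A : ℤ) - #B)]

lemma pow_sub_two_mul_sq_le_pow (n : ℕ) : n ^ (n - 2) * n ^ 2 ≤ n ^ n := by
  rcases n with _ | _ | n <;> simp [← pow_add]

lemma pow_three_le_four_pow_ceil {x : ℝ} (hx : 0 ≤ x) : x ^ 3 ≤ 4 ^ ⌈3 * Real.log x⌉₊ := by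
  rcases hx.eq_or_lt with rfl | hx
  · simp
  calc x ^ 3 = Real.exp (Real.log (x ^ 3)) := (Real.exp_log (by positivity)).symm
    _ = Real.exp (3 * Real.log x) := by rw [Real.log_pow]; norm_num
    _ ≤ Real.exp ⌈3 * Real.log x⌉₊ := Real.exp_le_exp.mpr (Nat.le_ceil _)
    _ = Real.exp 1 ^ ⌈3 * Real.log x⌉₊ := (Real.exp_one_pow _).symm
    _ ≤ 4 ^ ⌈3 * Real.log x⌉₊ := by gcongr; linarith [Real.exp_one_lt_d9]

lemma updateRule_eq_iff_of_ge {s a b : ℤ} (ha : s ≤ a) (hb : s ≤ b) :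
    updateRule a b = s ↔ (a = s ∨ a = s + 1) ∧ b = s := by
  unfold updateRule; split_ifs <;> omega

lemma updateRule_eq_iff_of_le {ℓ a b : ℤ} (ha : a ≤ ℓ) (hb : b ≤ ℓ) :
    updateRule a b = ℓ ↔ (a = ℓ - 1 ∨ a = ℓ) ∧ b = ℓ := by
  unfold updateRule; split_ifs <;> omega

lemma updateRule_mem_Icc {s ℓ a b : ℤ} (ha : s ≤ a ∧ a ≤ ℓ) (hb : s ≤ b ∧ b ≤ ℓ) :
    s ≤ updateRule a b ∧ updateRule a b ≤ ℓ := by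
  unfold updateRule; split_ifs <;> omega

section count

variable {n : ℕ}

lemma count_le (i : ℤ) (x : Fin n → ℤ) : count n i x ≤ n :=
  (card_filter_le _ _).trans_eq (card_fin n)

lemma count_update_eq_sum (x : Fin n → ℤ) (c : Fin n → Fin n) {i : ℤ} (P : ℤ → Prop)
    [DecidablePred P] (hP : ∀ v w, updateRule (x v) (x w) = i ↔ P (x v) ∧ x w = i) :
    count n i (fun v => updateRule (x v) (x (c v))) =
      ∑ v ∈ univ.filter (fun v => P (x v)), if x (c v) = i then 1 else 0 := by
  rw [← card_filter, filter_filter, count]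
  simp only [hP]

lemma disjoint_filter_near_min_near_max {s ℓ : ℤ} (h3 : s + 3 ≤ ℓ) (x : Fin n → ℤ) :
    Disjoint (univ.filter fun v => x v = s ∨ x v = s + 1)
      (univ.filter fun v => x v = ℓ - 1 ∨ x v = ℓ) := by
  rw [disjoint_filter]; omega

lemma sum_count_update_mul_count_update {s ℓ : ℤ} (h3 : s + 3 ≤ ℓ) {x : Fin n → ℤ}
    (hx : ∀ v, s ≤ x v ∧ x v ≤ ℓ) :
    ∑ c : Fin n → Fin n, count n s (fun v => updateRule (x v) (x (c v))) *
        count n ℓ (fun v => updateRule (x v) (x (c v))) =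
      #(univ.filter fun v => x v = s ∨ x v = s + 1) *
        #(univ.filter fun v => x v = ℓ - 1 ∨ x v = ℓ) *
        (count n s x * count n ℓ x * n ^ (n - 2)) := by
  simp_rw [count_update_eq_sum x _ (fun a => a = s ∨ a = s + 1)
      fun v w => updateRule_eq_iff_of_ge (hx v).1 (hx w).1,
    count_update_eq_sum x _ (fun a => a = ℓ - 1 ∨ a = ℓ)
      fun v w => updateRule_eq_iff_of_le (hx v).2 (hx w).2]
  rw [sum_sum_apply_mul_sum_apply (disjoint_filter_near_min_near_max h3 x)
    (fun u => if x u = s then 1 else 0) (fun u => if x u = ℓ then 1 else 0),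
    count, count, card_filter (fun u => x u = s), card_filter (fun u => x u = ℓ), Fintype.card_fin]
  simp only [Nat.cast_id]

lemma sum_count_update_mul_count_update_mul_four_le {s ℓ : ℤ} (h3 : s + 3 ≤ ℓ)
    {x : Fin n → ℤ} (hx : ∀ v, s ≤ x v ∧ x v ≤ ℓ) :
    (∑ c : Fin n → Fin n, count n s (fun v => updateRule (x v) (x (c v))) *
        count n ℓ (fun v => updateRule (x v) (x (c v)))) * 4 ≤
      n ^ n * (count n s x * count n ℓ x) := by
  set A := univ.filter fun v => x v = s ∨ x v = s + 1
  set B := univ.filter fun v => x v = ℓ - 1 ∨ x v = ℓ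
  rw [sum_count_update_mul_count_update h3 hx]
  calc #A * #B * (count n s x * count n ℓ x * n ^ (n - 2)) * 4
      = n ^ (n - 2) * (4 * (#A * #B)) * (count n s x * count n ℓ x) := by ring
    _ ≤ n ^ (n - 2) * n ^ 2 * (count n s x * count n ℓ x) := by
      gcongr; simpa using four_mul_card_mul_card_le_sq (disjoint_filter_near_min_near_max h3 x)
    _ ≤ n ^ n * (count n s x * count n ℓ x) := by
      gcongr; exact pow_sub_two_mul_sq_le_pow n

end count

section process

variable {n : ℕ} [NeZero n]

lemma lexpVal_step_le {s ℓ : ℤ} (h3 : s + 3 ≤ ℓ) {x : Fin n → ℤ}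
    (hx : ∀ v, s ≤ x v ∧ x v ≤ ℓ) :
    lexpVal (step n x) (fun y => (count n s y : ℝ≥0∞) * count n ℓ y) ≤
      4⁻¹ * ((count n s x : ℝ≥0∞) * count n ℓ x) := by
  rw [step, lexpVal_map, lexpVal_uniformOfFintype, Fintype.card_fun, Fintype.card_fin,
    ENNReal.inv_mul_le_iff (by simp [NeZero.ne n]) (by simp), Function.comp_def,
    ← ENNReal.div_eq_inv_mul, ← mul_div_assoc, ENNReal.le_div_iff_mul_le (by simp) (by simp)]
  beta_reduce
  exact_mod_cast sum_count_update_mul_count_update_mul_four_le h3 hx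

lemma expVal_step_le {s ℓ : ℤ} (h3 : s + 3 ≤ ℓ) {x : Fin n → ℤ}
    (hx : ∀ v, s ≤ x v ∧ x v ≤ ℓ) :
    expVal (step n x) (fun y => (count n s y : ℝ) * (count n ℓ y : ℝ)) ≤
      (1 / 4) * ((count n s x : ℝ) * (count n ℓ x : ℝ)) := by
  calc expVal (step n x) (fun y => (count n s y : ℝ) * (count n ℓ y : ℝ))
      = (lexpVal (step n x) fun y => (count n s y : ℝ≥0∞) * count n ℓ y).toReal := by
        rw [← expVal_toReal _ fun y => by finiteness]; simp
    _ ≤ (4⁻¹ * ((count n s x : ℝ≥0∞) * count n ℓ x)).toReal :=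
        ENNReal.toReal_mono (by finiteness) (lexpVal_step_le h3 hx)
    _ = (1 / 4) * ((count n s x : ℝ) * (count n ℓ x : ℝ)) := by simp

lemma mem_Icc_of_mem_support_step {s ℓ : ℤ} {x y : Fin n → ℤ} (hx : ∀ v, s ≤ x v ∧ x v ≤ ℓ)
    (hy : y ∈ (step n x).support) (v : Fin n) : s ≤ y v ∧ y v ≤ ℓ := by
  obtain ⟨c, -, rfl⟩ := (PMF.mem_support_map_iff _ _ _).mp hy
  exact updateRule_mem_Icc (hx v) (hx (c v))

lemma mem_Icc_of_mem_support_dist {x0 : Fin n → ℤ} {s ℓ : ℤ} (hs : IsLeast (Set.range x0) s)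
    (hℓ : IsGreatest (Set.range x0) ℓ) {t : ℕ} {y : Fin n → ℤ} (hy : y ∈ (dist n x0 t).support)
    (v : Fin n) : s ≤ y v ∧ y v ≤ ℓ := by
  induction t generalizing y v with
  | zero =>
    obtain rfl : y = x0 := by simpa [dist] using hy
    exact ⟨hs.2 ⟨v, rfl⟩, hℓ.2 ⟨v, rfl⟩⟩
  | succ t ih =>
    obtain ⟨x, hx, hy⟩ := (PMF.mem_support_bind_iff _ _ _).mp hy
    exact mem_Icc_of_mem_support_step (ih hx) hy v

lemma lexpVal_dist_le {x0 : Fin n → ℤ} {s ℓ : ℤ} (hs : IsLeast (Set.range x0) s)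
    (hℓ : IsGreatest (Set.range x0) ℓ) (h3 : s + 3 ≤ ℓ) (t : ℕ) :
    lexpVal (dist n x0 t) (fun y => (count n s y : ℝ≥0∞) * count n ℓ y) ≤
      4⁻¹ ^ t * ((count n s x0 : ℝ≥0∞) * count n ℓ x0) := by
  induction t with
  | zero => simp [dist, lexpVal_pure]
  | succ t ih =>
    calc lexpVal (dist n x0 (t + 1)) (fun y => (count n s y : ℝ≥0∞) * count n ℓ y)
        ≤ 4⁻¹ * lexpVal (dist n x0 t) (fun y => (count n s y : ℝ≥0∞) * count n ℓ y) :=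
          lexpVal_bind_le fun x hx =>
            lexpVal_step_le h3 (mem_Icc_of_mem_support_dist hs hℓ hx)
      _ ≤ 4⁻¹ * (4⁻¹ ^ t * ((count n s x0 : ℝ≥0∞) * count n ℓ x0)) := by gcongr
      _ = 4⁻¹ ^ (t + 1) * ((count n s x0 : ℝ≥0∞) * count n ℓ x0) := by ring

lemma prob_dist_count_mul_count_pos_le {x0 : Fin n → ℤ} {s ℓ : ℤ}
    (hs : IsLeast (Set.range x0) s) (hℓ : IsGreatest (Set.range x0) ℓ) (h3 : s + 3 ≤ ℓ)
    (t : ℕ) : prob (dist n x0 t) {y | 0 < count n s y * count n ℓ y} ≤ n ^ 2 / 4 ^ t := by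
  have hE := lexpVal_dist_le hs hℓ h3 t
  have hcount : (count n s x0 : ℝ) * count n ℓ x0 ≤ n ^ 2 := by
    rw [sq]; gcongr <;> exact_mod_cast count_le _ x0
  calc prob (dist n x0 t) {y | 0 < count n s y * count n ℓ y}
      ≤ (lexpVal (dist n x0 t) fun y => (count n s y : ℝ≥0∞) * count n ℓ y).toReal :=
        prob_le_lexpVal _ (fun y hy => by exact_mod_cast hy)
          (ne_top_of_le_ne_top (by finiteness) hE)
    _ ≤ (4⁻¹ ^ t * ((count n s x0 : ℝ≥0∞) * count n ℓ x0)).toReal :=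
        ENNReal.toReal_mono (by finiteness) hE
    _ ≤ n ^ 2 / 4 ^ t := by
        simpa [div_eq_inv_mul] using
          mul_le_mul_of_nonneg_left hcount (by positivity : (0 : ℝ) ≤ (4 ^ t)⁻¹)

end process

/-- **Elimination of an extreme opinion for synchronous incremental voting on `K_n`**:
if `ℓ ≥ s + 3`, then `E[N_s(t+1)·N_ℓ(t+1) | X(t)] ≤ (1/4)·N_s(t)·N_ℓ(t)`, and for
`T = ⌈3 log n⌉` we have `P[N_s(T)·N_ℓ(T) > 0] ≤ 1/n`. -/
theorem extreme_opinion_elimination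
    (n : ℕ) [NeZero n] (x0 : Fin n → ℤ) (s ℓ : ℤ)
    (hs : IsLeast (Set.range x0) s) (hℓ : IsGreatest (Set.range x0) ℓ)
    (h3 : s + 3 ≤ ℓ) :
    (∀ x : Fin n → ℤ, (∀ v, s ≤ x v ∧ x v ≤ ℓ) →
      expVal (step n x) (fun y => (count n s y : ℝ) * (count n ℓ y : ℝ)) ≤
        (1 / 4) * ((count n s x : ℝ) * (count n ℓ x : ℝ))) ∧
    prob (dist n x0 ⌈3 * Real.log n⌉₊) {y | 0 < count n s y * count n ℓ y} ≤ 1 / n := by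
  refine ⟨fun x hx => expVal_step_le h3 hx,
    (prob_dist_count_mul_count_pos_le hs hℓ h3 _).trans ?_⟩
  have hn : (0 : ℝ) < n := by simp [Nat.pos_of_neZero n]
  rw [div_le_div_iff₀ (by positivity) hn, one_mul, ← pow_succ]
  exact pow_three_le_four_pow_ceil hn.le

end KnSync8
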